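/- Let y = Ax + e, where A ∈ ℝ^{m×n} (m ≤ n) has largest singular value σ₁, smallest singular value σ_m, and restricted isometry constant δ_{3k} of order 3k; x ∈ ℝⁿ is a nonnegative k-sparse vector and e ∈ ℝ^m. Suppose δ_{3k} + σ₁² − σ_m² < (√5 − 1)/2. Fix ε > 0 and a stepsize λ with σ_m² + (σ_m²/σ₁²)ε ≤ λ ≤ σ_m² + ε. Define the sequence {x⁽ᵖ⁾} by x⁽ᵖ⁺¹⁾ = H_k((x⁽ᵖ⁾ + λ(AᵀA + εI)⁻¹Aᵀ(y − Ax⁽ᵖ⁾))⁺) from an arbitrary starting point x⁽⁰⁾ ∈ ℝⁿ (with x⁽⁰⁾ k-sparse). Then for every p ≥ 0, ‖x⁽ᵖ⁾ − x‖₂ ≤ αᵖ‖x⁽⁰⁾ − x‖₂ + (γ/(1−α))‖e‖₂, where α := φ(δ_{3k} + σ₁² − λσ₁²/(σ₁² + ε)) < 1 and γ := φλσ₁/(σ_m² + ε), with φ = (√5 + 1)/2. In particular, if e = 0 then x⁽ᵖ⁾ converges to x. -/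

import Mathlib

open Matrix

/-- The Euclidean (ℓ₂) norm of a vector in ℝ^d. -/
noncomputable def l2 {d : ℕ} (v : Fin d → ℝ) : ℝ := Real.sqrt (∑ i, v i ^ 2)

/-- The restricted isometry constant of order `k` of a matrix `A`: the smallest `δ ≥ 0`
such that `(1 - δ)‖x‖² ≤ ‖Ax‖² ≤ (1 + δ)‖x‖²` for all `k`-sparse vectors `x`. -/
noncomputable def RIC {m n : ℕ} (A : Matrix (Fin m) (Fin n) ℝ) (k : ℕ) : ℝ :=
  sInf {δ : ℝ | 0 ≤ δ ∧ ∀ x : Fin n → ℝ, (Function.support x).ncard ≤ k →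
    (1 - δ) * l2 x ^ 2 ≤ l2 (A *ᵥ x) ^ 2 ∧ l2 (A *ᵥ x) ^ 2 ≤ (1 + δ) * l2 x ^ 2}

lemma l2_nonneg {d : ℕ} (v : Fin d → ℝ) : 0 ≤ l2 v := Real.sqrt_nonneg _

lemma l2_sq {d : ℕ} (v : Fin d → ℝ) : l2 v ^ 2 = ∑ i, v i ^ 2 :=
  Real.sq_sqrt (Finset.sum_nonneg fun i _ => sq_nonneg _)

lemma l2_mono {d : ℕ} {v w : Fin d → ℝ} (h : ∀ i, |v i| ≤ |w i|) : l2 v ≤ l2 w :=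
  Real.sqrt_le_sqrt (Finset.sum_le_sum fun i _ => by
    simpa [sq_abs] using pow_le_pow_left₀ (abs_nonneg _) (h i) 2)

lemma l2_smul {d : ℕ} (c : ℝ) (v : Fin d → ℝ) : l2 (c • v) = |c| * l2 v := by
  unfold l2
  rw [← Real.sqrt_sq_eq_abs, ← Real.sqrt_mul (sq_nonneg c), Finset.mul_sum]
  congr 1; refine Finset.sum_congr rfl fun i _ => ?_
  simp [mul_pow]

lemma dot_le_l2 {d : ℕ} (v w : Fin d → ℝ) : v ⬝ᵥ w ≤ l2 v * l2 w := by
  have h := Finset.sum_mul_sq_le_sq_mul_sq Finset.univ v w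
  have h2 : (v ⬝ᵥ w) ^ 2 ≤ (l2 v * l2 w) ^ 2 := by
    rw [mul_pow, l2_sq, l2_sq]; simpa [dotProduct] using h
  have hq : (0:ℝ) ≤ l2 v * l2 w := mul_nonneg (l2_nonneg v) (l2_nonneg w)
  nlinarith [h2, hq]

lemma l2_add_le {d : ℕ} (v w : Fin d → ℝ) : l2 (v + w) ≤ l2 v + l2 w := by
  have h1 : l2 (v + w) ^ 2 ≤ (l2 v + l2 w) ^ 2 := by
    rw [l2_sq]
    have : ∑ i, (v i + w i) ^ 2 = (∑ i, v i ^ 2) + 2 * (v ⬝ᵥ w) + ∑ i, w i ^ 2 := by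
      simp [dotProduct, Finset.mul_sum, ← Finset.sum_add_distrib]; ring_nf
    rw [show ((v + w : Fin d → ℝ)) = fun i => v i + w i from rfl]
    rw [this, ← l2_sq v, ← l2_sq w]
    nlinarith [dot_le_l2 v w]
  nlinarith [l2_nonneg (v + w), l2_nonneg v, l2_nonneg w]

lemma le_of_sq_le_sq' {p q : ℝ} (hp : 0 ≤ p) (hq : 0 ≤ q) (h : p ^ 2 ≤ q ^ 2) : p ≤ q := by
  rw [← Real.sqrt_sq hp, ← Real.sqrt_sq hq]; exact Real.sqrt_le_sqrt h

section spec
variable {d : ℕ}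

lemma l2_eq_norm (w : Fin d → ℝ) : l2 w = ‖(WithLp.equiv 2 (Fin d → ℝ)).symm w‖ := by
  rw [EuclideanSpace.norm_eq]
  unfold l2
  congr 1
  refine Finset.sum_congr rfl fun i _ => ?_
  simp [Real.norm_eq_abs, sq_abs]

lemma inner_eq_dot (x y : EuclideanSpace ℝ (Fin d)) : (inner ℝ x y : ℝ) = (⇑x) ⬝ᵥ (⇑y) := by
  rw [PiLp.inner_apply]; exact Finset.sum_congr rfl fun i _ => by simp [mul_comm]

variable {G : Matrix (Fin d) (Fin d) ℝ}

lemma herm_transpose (hG : G.IsHermitian) : Gᵀ = G := by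
  have := hG.eq
  ext i j
  have h := congrFun (congrFun this i) j
  simpa [conjTranspose_apply] using h

lemma norm_sq_eqB (hG : G.IsHermitian) (x : EuclideanSpace ℝ (Fin d)) :
    ‖x‖ ^ 2 = ∑ j, (inner ℝ (hG.eigenvectorBasis j) x : ℝ) ^ 2 := by
  rw [← real_inner_self_eq_norm_sq, ← hG.eigenvectorBasis.sum_inner_mul_inner x x]
  exact Finset.sum_congr rfl fun j _ => by rw [real_inner_comm x (hG.eigenvectorBasis j)]; ring

lemma dot_eigen_mulVec (hG : G.IsHermitian) (N : Matrix (Fin d) (Fin d) ℝ) (hNs : Nᵀ = N)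
    (g : Fin d → ℝ) (hN : ∀ j, N *ᵥ ⇑(hG.eigenvectorBasis j) = g j • ⇑(hG.eigenvectorBasis j))
    (w : Fin d → ℝ) (j : Fin d) :
    (inner ℝ (hG.eigenvectorBasis j) ((WithLp.equiv 2 (Fin d → ℝ)).symm (N *ᵥ w)) : ℝ)
      = g j * (inner ℝ (hG.eigenvectorBasis j) ((WithLp.equiv 2 (Fin d → ℝ)).symm w) : ℝ) := by
  rw [inner_eq_dot, inner_eq_dot]
  have hc : (⇑((WithLp.equiv 2 (Fin d → ℝ)).symm (N *ᵥ w)) : Fin d → ℝ) = N *ᵥ w := rfl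
  have hc2 : (⇑((WithLp.equiv 2 (Fin d → ℝ)).symm w) : Fin d → ℝ) = w := rfl
  rw [hc, hc2]
  have h1 : (⇑(hG.eigenvectorBasis j) : Fin d → ℝ) ⬝ᵥ (N *ᵥ w)
      = (N *ᵥ ⇑(hG.eigenvectorBasis j)) ⬝ᵥ w := by
    rw [dotProduct_mulVec]
    conv_lhs => rw [← hNs]
    rw [vecMul_transpose]
  rw [h1, hN j, smul_dotProduct, smul_eq_mul]

lemma diag_bound (hG : G.IsHermitian) (N : Matrix (Fin d) (Fin d) ℝ) (hNs : Nᵀ = N)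
    (g : Fin d → ℝ)
    (hN : ∀ j, N *ᵥ ⇑(hG.eigenvectorBasis j) = g j • ⇑(hG.eigenvectorBasis j))
    {c : ℝ} (hc : ∀ j, |g j| ≤ c) (hc0 : 0 ≤ c) (w : Fin d → ℝ) :
    l2 (N *ᵥ w) ≤ c * l2 w := by
  have h1 : l2 (N *ᵥ w) ^ 2 ≤ (c * l2 w) ^ 2 := by
    rw [mul_pow, l2_eq_norm, l2_eq_norm, norm_sq_eqB hG, norm_sq_eqB hG, Finset.mul_sum]
    refine Finset.sum_le_sum fun j _ => ?_
    rw [dot_eigen_mulVec hG N hNs g hN w j, mul_pow]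
    have h2 : g j ^ 2 ≤ c ^ 2 := by
      have := abs_le.mp (hc j)
      nlinarith [this.1, this.2]
    exact mul_le_mul_of_nonneg_right h2 (sq_nonneg _)
  exact le_of_sq_le_sq' (l2_nonneg _) (mul_nonneg hc0 (l2_nonneg w)) h1

lemma quad_ub {d : ℕ} {G : Matrix (Fin d) (Fin d) ℝ} (hG : G.IsHermitian) {b : ℝ}
    (hb : ∀ μ ∈ spectrum ℝ G, μ ≤ b) (w : Fin d → ℝ) :
    w ⬝ᵥ (G *ᵥ w) ≤ b * l2 w ^ 2 := by
  classical
  have hN : ∀ j, G *ᵥ ⇑(hG.eigenvectorBasis j) = hG.eigenvalues j • ⇑(hG.eigenvectorBasis j) :=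
    fun j => hG.mulVec_eigenvectorBasis j
  have key : w ⬝ᵥ (G *ᵥ w) = ∑ j, hG.eigenvalues j *
      (inner ℝ (hG.eigenvectorBasis j) ((WithLp.equiv 2 (Fin d → ℝ)).symm w) : ℝ) ^ 2 := by
    have h1 : w ⬝ᵥ (G *ᵥ w) = (inner ℝ ((WithLp.equiv 2 (Fin d → ℝ)).symm w)
        ((WithLp.equiv 2 (Fin d → ℝ)).symm (G *ᵥ w)) : ℝ) := by
      rw [inner_eq_dot]; rfl
    rw [h1, ← hG.eigenvectorBasis.sum_inner_mul_inner]
    refine Finset.sum_congr rfl fun j _ => ?_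
    rw [dot_eigen_mulVec hG G (herm_transpose hG) hG.eigenvalues hN w j,
      real_inner_comm ((WithLp.equiv 2 (Fin d → ℝ)).symm w) (hG.eigenvectorBasis j)]
    ring
  have hpar : l2 w ^ 2 = ∑ j,
      (inner ℝ (hG.eigenvectorBasis j) ((WithLp.equiv 2 (Fin d → ℝ)).symm w) : ℝ) ^ 2 := by
    rw [l2_eq_norm, norm_sq_eqB hG]
  rw [key, hpar, Finset.mul_sum]
  refine Finset.sum_le_sum fun j _ => ?_
  have := hb _ (hG.eigenvalues_mem_spectrum_real j)
  nlinarith [sq_nonneg (inner ℝ (hG.eigenvectorBasis j) ((WithLp.equiv 2 (Fin d → ℝ)).symm w) : ℝ)]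

end spec

lemma l2_sq_dot {d : ℕ} (v : Fin d → ℝ) : l2 v ^ 2 = v ⬝ᵥ v := by
  rw [l2_sq]; exact Finset.sum_congr rfl fun i _ => sq (v i) ▸ (sq (v i)).symm ▸ by ring

lemma dot_self_nonneg {d : ℕ} (v : Fin d → ℝ) : 0 ≤ v ⬝ᵥ v :=
  Finset.sum_nonneg fun i _ => mul_self_nonneg _

section mats
variable {m n : ℕ} (A : Matrix (Fin m) (Fin n) ℝ)

lemma conjT_eq (M : Matrix (Fin m) (Fin n) ℝ) : Mᴴ = Mᵀ := by
  ext i j; simp [conjTranspose_apply]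

lemma hermG : (A * Aᵀ).IsHermitian := by
  have h := isHermitian_mul_conjTranspose_self A
  rwa [conjT_eq] at h

lemma hermH : (Aᵀ * A).IsHermitian := by
  have h := isHermitian_conjTranspose_mul_self A
  rwa [conjT_eq] at h

lemma quadH (x : Fin n → ℝ) :
    x ⬝ᵥ ((Aᵀ * A + (ε : ℝ) • 1) *ᵥ x) = (A *ᵥ x) ⬝ᵥ (A *ᵥ x) + ε * (x ⬝ᵥ x) := by
  rw [add_mulVec, dotProduct_add, smul_mulVec, one_mulVec, dotProduct_smul, smul_eq_mul,
    ← mulVec_mulVec, dotProduct_mulVec, vecMul_transpose]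

lemma posdef_smul_one {d : ℕ} {ε : ℝ} (hε : 0 < ε) : ((ε • 1 : Matrix (Fin d) (Fin d) ℝ)).IsHermitian := by
  ext i j
  by_cases h : i = j
  · subst h; simp [conjTranspose_apply, one_apply]
  · simp [conjTranspose_apply, one_apply, h, Ne.symm h]

lemma posdefH {ε : ℝ} (hε : 0 < ε) : (Aᵀ * A + ε • 1).PosDef := by
  rw [posDef_iff_dotProduct_mulVec]
  constructor
  · exact (hermH A).add (posdef_smul_one hε)
  · intro z hz
    have hstar : (star z : Fin n → ℝ) = z := by simp
    rw [hstar, quadH]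
    have h1 : 0 < z ⬝ᵥ z := by
      rcases Function.ne_iff.mp hz with ⟨i, hi⟩
      have : 0 < z i * z i := by
        have := sub_ne_zero.mpr hi
        simp only [Pi.zero_apply] at hi
        exact mul_self_pos.mpr hi
      exact lt_of_lt_of_le this (Finset.single_le_sum (f := fun j => z j * z j)
        (fun j _ => mul_self_nonneg _) (Finset.mem_univ i))
    nlinarith [dot_self_nonneg (A *ᵥ z)]

lemma posdefG {ε : ℝ} (hε : 0 < ε) : (A * Aᵀ + ε • 1).PosDef := by
  have h := posdefH Aᵀ (ε := ε) hε
  rwa [transpose_transpose] at h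
end mats


section ops
variable {m n : ℕ}

noncomputable def Cmat (A : Matrix (Fin m) (Fin n) ℝ) (ε : ℝ) : Matrix (Fin m) (Fin m) ℝ :=
  (A * Aᵀ + ε • 1)⁻¹

variable (A : Matrix (Fin m) (Fin n) ℝ) {ε : ℝ}

lemma hermGE (hε : 0 < ε) : (A * Aᵀ + ε • 1).IsHermitian := (hermG A).add (posdef_smul_one hε)

lemma Cmat_symm (hε : 0 < ε) : (Cmat A ε)ᵀ = Cmat A ε := by
  unfold Cmat
  rw [transpose_nonsing_inv, herm_transpose (hermGE A hε)]

lemma GE_mulVec_eigen (j : Fin m) :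
    (A * Aᵀ + ε • 1) *ᵥ ⇑((hermG A).eigenvectorBasis j)
      = ((hermG A).eigenvalues j + ε) • ⇑((hermG A).eigenvectorBasis j) := by
  rw [add_mulVec, (hermG A).mulVec_eigenvectorBasis, smul_mulVec, one_mulVec]
  ext i
  simp [Pi.smul_apply, smul_eq_mul]
  ring

lemma Cmat_mulVec_eigen (hε : 0 < ε) (hpos : ∀ j, 0 ≤ (hermG A).eigenvalues j) (j : Fin m) :
    Cmat A ε *ᵥ ⇑((hermG A).eigenvectorBasis j)
      = ((hermG A).eigenvalues j + ε)⁻¹ • ⇑((hermG A).eigenvectorBasis j) := by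
  have hdet : IsUnit (A * Aᵀ + ε • 1).det :=
    (Matrix.isUnit_iff_isUnit_det _).mp (posdefG A hε).isUnit
  have h1 : Cmat A ε *ᵥ ((A * Aᵀ + ε • 1) *ᵥ ⇑((hermG A).eigenvectorBasis j))
      = ⇑((hermG A).eigenvectorBasis j) := by
    rw [mulVec_mulVec]
    unfold Cmat
    rw [nonsing_inv_mul _ hdet, one_mulVec]
  rw [GE_mulVec_eigen A j, mulVec_smul] at h1
  have hne : ((hermG A).eigenvalues j + ε) ≠ 0 := by have := hpos j; nlinarith
  rw [eq_comm, inv_smul_eq_iff₀ hne]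
  exact h1.symm

lemma swap_inv (hε : 0 < ε) : (Aᵀ * A + ε • 1)⁻¹ * Aᵀ = Aᵀ * Cmat A ε := by
  have hdetH : IsUnit (Aᵀ * A + ε • 1).det :=
    (Matrix.isUnit_iff_isUnit_det _).mp (posdefH A hε).isUnit
  have hdetG : IsUnit (A * Aᵀ + ε • 1).det :=
    (Matrix.isUnit_iff_isUnit_det _).mp (posdefG A hε).isUnit
  have hswap : (Aᵀ * A + ε • 1) * Aᵀ = Aᵀ * (A * Aᵀ + ε • 1) := by
    rw [Matrix.add_mul, Matrix.mul_add, Matrix.smul_mul, Matrix.one_mul, Matrix.mul_smul,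
      Matrix.mul_one, Matrix.mul_assoc]
  calc (Aᵀ * A + ε • 1)⁻¹ * Aᵀ
      = (Aᵀ * A + ε • 1)⁻¹ * Aᵀ * ((A * Aᵀ + ε • 1) * Cmat A ε) := by
        unfold Cmat; rw [mul_nonsing_inv _ hdetG, Matrix.mul_one]
    _ = (Aᵀ * A + ε • 1)⁻¹ * (Aᵀ * (A * Aᵀ + ε • 1)) * Cmat A ε := by
        simp only [Matrix.mul_assoc]
    _ = (Aᵀ * A + ε • 1)⁻¹ * ((Aᵀ * A + ε • 1) * Aᵀ) * Cmat A ε := by rw [← hswap]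
    _ = (Aᵀ * A + ε • 1)⁻¹ * (Aᵀ * A + ε • 1) * (Aᵀ * Cmat A ε) := by
        simp only [Matrix.mul_assoc]
    _ = Aᵀ * Cmat A ε := by rw [nonsing_inv_mul _ hdetH, Matrix.one_mul]
end ops


section bounds
variable {m n : ℕ} (A : Matrix (Fin m) (Fin n) ℝ) {ε σ1 σm lam : ℝ}

lemma eig_lb (hσmmin : ∀ μ ∈ spectrum ℝ (A * Aᵀ), σm ^ 2 ≤ μ) (j : Fin m) :
    σm ^ 2 ≤ (hermG A).eigenvalues j :=
  hσmmin _ ((hermG A).eigenvalues_mem_spectrum_real j)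

lemma eig_ub (hσ1max : ∀ μ ∈ spectrum ℝ (A * Aᵀ), μ ≤ σ1 ^ 2) (j : Fin m) :
    (hermG A).eigenvalues j ≤ σ1 ^ 2 :=
  hσ1max _ ((hermG A).eigenvalues_mem_spectrum_real j)

lemma bound_At (hσ1 : 0 ≤ σ1) (hσ1max : ∀ μ ∈ spectrum ℝ (A * Aᵀ), μ ≤ σ1 ^ 2)
    (w : Fin m → ℝ) : l2 (Aᵀ *ᵥ w) ≤ σ1 * l2 w := by
  have h1 : l2 (Aᵀ *ᵥ w) ^ 2 = w ⬝ᵥ ((A * Aᵀ) *ᵥ w) := by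
    rw [l2_sq_dot, ← mulVec_mulVec, dotProduct_mulVec, ← mulVec_transpose,
      transpose_transpose, dotProduct_comm]
  have h2 := quad_ub (hermG A) hσ1max w
  refine le_of_sq_le_sq' (l2_nonneg _) (mul_nonneg hσ1 (l2_nonneg w)) ?_
  rw [h1, mul_pow]
  exact h2

lemma bound_A (hσ1 : 0 ≤ σ1) (hσ1max : ∀ μ ∈ spectrum ℝ (A * Aᵀ), μ ≤ σ1 ^ 2)
    (z : Fin n → ℝ) : l2 (A *ᵥ z) ≤ σ1 * l2 z := by
  have h1 : l2 (A *ᵥ z) ^ 2 = (Aᵀ *ᵥ (A *ᵥ z)) ⬝ᵥ z := by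
    rw [l2_sq_dot]
    conv_lhs => rw [dotProduct_mulVec, ← mulVec_transpose]
  have h2 : (Aᵀ *ᵥ (A *ᵥ z)) ⬝ᵥ z ≤ σ1 * l2 (A *ᵥ z) * l2 z := by
    calc (Aᵀ *ᵥ (A *ᵥ z)) ⬝ᵥ z ≤ l2 (Aᵀ *ᵥ (A *ᵥ z)) * l2 z := dot_le_l2 _ _
      _ ≤ σ1 * l2 (A *ᵥ z) * l2 z :=
        mul_le_mul_of_nonneg_right (bound_At A hσ1 hσ1max _) (l2_nonneg z)
  nlinarith [l2_nonneg (A *ᵥ z), l2_nonneg z, mul_nonneg hσ1 (l2_nonneg z)]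

lemma bound_C (hε : 0 < ε) (hσm : 0 ≤ σm)
    (hσmmin : ∀ μ ∈ spectrum ℝ (A * Aᵀ), σm ^ 2 ≤ μ) (w : Fin m → ℝ) :
    l2 (Cmat A ε *ᵥ w) ≤ (σm ^ 2 + ε)⁻¹ * l2 w := by
  have hpos : ∀ j, 0 ≤ (hermG A).eigenvalues j := fun j => by
    have := eig_lb A hσmmin j; nlinarith
  refine diag_bound (hermG A) _ (Cmat_symm A hε) _ (Cmat_mulVec_eigen A hε hpos) ?_ ?_ w
  · intro j
    have h1 := eig_lb A hσmmin j
    have h2 : (0:ℝ) < σm ^ 2 + ε := by positivity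
    have h3 : (0:ℝ) < (hermG A).eigenvalues j + ε := by nlinarith
    rw [abs_of_nonneg (le_of_lt (inv_pos.mpr h3))]
    exact inv_anti₀ h2 (by linarith)
  · positivity

lemma bound_M (hε : 0 < ε) (hσm : 0 ≤ σm) (hσ1σm : σm ^ 2 ≤ σ1 ^ 2) (hlam0 : 0 ≤ lam) (hlam : lam ≤ σm ^ 2 + ε)
    (hσmmin : ∀ μ ∈ spectrum ℝ (A * Aᵀ), σm ^ 2 ≤ μ)
    (hσ1max : ∀ μ ∈ spectrum ℝ (A * Aᵀ), μ ≤ σ1 ^ 2) (w : Fin m → ℝ) :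
    l2 ((1 - lam • Cmat A ε) *ᵥ w) ≤ (1 - lam * (σ1 ^ 2 + ε)⁻¹) * l2 w := by
  have hpos : ∀ j, 0 ≤ (hermG A).eigenvalues j := fun j => by
    have := eig_lb A hσmmin j; nlinarith
  have hsym : (1 - lam • Cmat A ε)ᵀ = 1 - lam • Cmat A ε := by
    rw [transpose_sub, transpose_smul, transpose_one, Cmat_symm A hε]
  have heig : ∀ j, (1 - lam • Cmat A ε) *ᵥ ⇑((hermG A).eigenvectorBasis j)
      = (1 - lam * ((hermG A).eigenvalues j + ε)⁻¹) • ⇑((hermG A).eigenvectorBasis j) := by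
    intro j
    rw [sub_mulVec, one_mulVec, smul_mulVec, Cmat_mulVec_eigen A hε hpos]
    ext i
    simp [Pi.smul_apply, Pi.sub_apply, smul_eq_mul]
    ring
  have hub : (0:ℝ) < σ1 ^ 2 + ε := by positivity
  refine diag_bound (hermG A) _ hsym _ heig ?_ ?_ w
  · intro j
    have h1 := eig_lb A hσmmin j
    have h2 := eig_ub A hσ1max j
    have h3 : (0:ℝ) < (hermG A).eigenvalues j + ε := by nlinarith
    have h4 : lam * ((hermG A).eigenvalues j + ε)⁻¹ ≤ 1 := by
      rw [← div_eq_mul_inv, div_le_one h3]; linarith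
    have h5 : lam * (σ1 ^ 2 + ε)⁻¹ ≤ lam * ((hermG A).eigenvalues j + ε)⁻¹ :=
      mul_le_mul_of_nonneg_left (inv_anti₀ h3 (by linarith)) hlam0
    rw [abs_of_nonneg (by linarith)]
    linarith
  · have h5 : lam * (σ1 ^ 2 + ε)⁻¹ ≤ 1 := by
      rw [← div_eq_mul_inv, div_le_one hub]
      linarith
    linarith

end bounds

lemma l2_eq_zero {d : ℕ} {v : Fin d → ℝ} (h : l2 v = 0) : v = 0 := by
  have h1 : ∑ i, v i ^ 2 = 0 := by
    have := l2_sq v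
    rw [h] at this
    simpa using this.symm
  funext i
  have := (Finset.sum_eq_zero_iff_of_nonneg (fun j _ => sq_nonneg (v j))).mp h1 i
    (Finset.mem_univ i)
  exact pow_eq_zero_iff (by norm_num : (2:ℕ) ≠ 0) |>.mp this

section ric
variable {m n : ℕ} (A : Matrix (Fin m) (Fin n) ℝ) (K : ℕ)

def RICset : Set ℝ := {δ : ℝ | 0 ≤ δ ∧ ∀ x : Fin n → ℝ, (Function.support x).ncard ≤ K →
    (1 - δ) * l2 x ^ 2 ≤ l2 (A *ᵥ x) ^ 2 ∧ l2 (A *ᵥ x) ^ 2 ≤ (1 + δ) * l2 x ^ 2}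

lemma RIC_eq : RIC A K = sInf (RICset A K) := rfl

lemma RICset_nonempty : (RICset A K).Nonempty := by
  refine ⟨1 + ∑ i, ∑ j, (A i j) ^ 2, by positivity, fun x _ => ?_⟩
  have hAx : l2 (A *ᵥ x) ^ 2 ≤ (∑ i, ∑ j, (A i j) ^ 2) * l2 x ^ 2 := by
    rw [l2_sq, l2_sq, Finset.sum_mul]
    refine Finset.sum_le_sum fun i _ => ?_
    have := Finset.sum_mul_sq_le_sq_mul_sq Finset.univ (A i) x
    simpa [mulVec, dotProduct] using this
  have h1 : (0:ℝ) ≤ ∑ i, ∑ j, (A i j) ^ 2 := by positivity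
  constructor
  · nlinarith [l2_nonneg x, sq_nonneg (l2 x), sq_nonneg (l2 (A *ᵥ x)), l2_sq (A *ᵥ x),
      Finset.sum_nonneg (fun i (_ : i ∈ Finset.univ) => sq_nonneg ((A *ᵥ x) i))]
  · nlinarith [sq_nonneg (l2 x)]

lemma RICset_bddBelow : BddBelow (RICset A K) := ⟨0, fun δ hδ => hδ.1⟩

lemma RICset_closed : IsClosed (RICset A K) := by
  have : RICset A K = (Set.Ici (0:ℝ)) ∩ ⋂ x : Fin n → ℝ,
      {δ : ℝ | (Function.support x).ncard ≤ K →
        ((1 - δ) * l2 x ^ 2 ≤ l2 (A *ᵥ x) ^ 2 ∧ l2 (A *ᵥ x) ^ 2 ≤ (1 + δ) * l2 x ^ 2)} := by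
    ext δ
    simp only [RICset, Set.mem_setOf_eq, Set.mem_inter_iff, Set.mem_Ici, Set.mem_iInter]
  rw [this]
  refine IsClosed.inter isClosed_Ici (isClosed_iInter fun x => ?_)
  by_cases hx : (Function.support x).ncard ≤ K
  · have : {δ : ℝ | (Function.support x).ncard ≤ K →
        ((1 - δ) * l2 x ^ 2 ≤ l2 (A *ᵥ x) ^ 2 ∧ l2 (A *ᵥ x) ^ 2 ≤ (1 + δ) * l2 x ^ 2)}
        = {δ : ℝ | (1 - δ) * l2 x ^ 2 ≤ l2 (A *ᵥ x) ^ 2}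
          ∩ {δ : ℝ | l2 (A *ᵥ x) ^ 2 ≤ (1 + δ) * l2 x ^ 2} := by
      ext δ; simp [hx]
    rw [this]
    exact IsClosed.inter
      (isClosed_le (by continuity) continuous_const)
      (isClosed_le continuous_const (by continuity))
  · have : {δ : ℝ | (Function.support x).ncard ≤ K →
        ((1 - δ) * l2 x ^ 2 ≤ l2 (A *ᵥ x) ^ 2 ∧ (l2 (A *ᵥ x) ^ 2 ≤ (1 + δ) * l2 x ^ 2))}
        = Set.univ := by
      ext δ; simp [hx]
    rw [this]; exact isClosed_univ

lemma RIC_mem : RIC A K ∈ RICset A K := by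
  rw [RIC_eq]
  exact (RICset_closed A K).csInf_mem (RICset_nonempty A K) (RICset_bddBelow A K)

lemma RIC_nonneg : 0 ≤ RIC A K := (RIC_mem A K).1

lemma RIC_rip : ∀ x : Fin n → ℝ, (Function.support x).ncard ≤ K →
    (1 - RIC A K) * l2 x ^ 2 ≤ l2 (A *ᵥ x) ^ 2
      ∧ l2 (A *ᵥ x) ^ 2 ≤ (1 + RIC A K) * l2 x ^ 2 := (RIC_mem A K).2
end ric

section rip
variable {m n : ℕ} {A : Matrix (Fin m) (Fin n) ℝ} {K : ℕ} {δ : ℝ}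

-- |q v| ≤ δ ‖v‖² for sparse v
lemma rip_q (hδ : ∀ x : Fin n → ℝ, (Function.support x).ncard ≤ K →
      (1 - δ) * l2 x ^ 2 ≤ l2 (A *ᵥ x) ^ 2 ∧ l2 (A *ᵥ x) ^ 2 ≤ (1 + δ) * l2 x ^ 2)
    {v : Fin n → ℝ} (hv : (Function.support v).ncard ≤ K) :
    |(A *ᵥ v) ⬝ᵥ (A *ᵥ v) - v ⬝ᵥ v| ≤ δ * (v ⬝ᵥ v) := by
  have h := hδ v hv
  rw [l2_sq_dot, l2_sq_dot] at h
  rw [abs_le]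
  constructor <;> nlinarith [h.1, h.2]

lemma support_ncard_le {Ω : Set (Fin n)} {v : Fin n → ℝ} (h : Function.support v ⊆ Ω)
    (hΩ : Ω.ncard ≤ K) : (Function.support v).ncard ≤ K :=
  le_trans (Set.ncard_le_ncard h (Set.toFinite Ω)) hΩ

lemma rip_polar (hδ : ∀ x : Fin n → ℝ, (Function.support x).ncard ≤ K →
      (1 - δ) * l2 x ^ 2 ≤ l2 (A *ᵥ x) ^ 2 ∧ l2 (A *ᵥ x) ^ 2 ≤ (1 + δ) * l2 x ^ 2)
    {Ω : Set (Fin n)} (hΩ : Ω.ncard ≤ K) {a b : Fin n → ℝ}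
    (ha : Function.support a ⊆ Ω) (hb : Function.support b ⊆ Ω) :
    |(A *ᵥ a) ⬝ᵥ (A *ᵥ b) - a ⬝ᵥ b| ≤ δ * (a ⬝ᵥ a + b ⬝ᵥ b) / 2 := by
  have hab : Function.support (a + b) ⊆ Ω :=
    le_trans (Function.support_add a b) (Set.union_subset ha hb)
  have hab' : Function.support (a - b) ⊆ Ω := by
    rw [sub_eq_add_neg]
    refine le_trans (Function.support_add a (-b)) (Set.union_subset ha ?_)
    intro i hi
    apply hb
    simp only [Function.mem_support, Pi.neg_apply, ne_eq, neg_eq_zero] at hi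
    exact hi
  have h1 := rip_q hδ (support_ncard_le hab hΩ)
  have h2 := rip_q hδ (support_ncard_le hab' hΩ)
  have e1 : A *ᵥ (a + b) = A *ᵥ a + A *ᵥ b := mulVec_add A a b
  have e2 : A *ᵥ (a - b) = A *ᵥ a - A *ᵥ b := mulVec_sub A a b
  rw [e1] at h1; rw [e2] at h2
  have d1 : (A *ᵥ a + A *ᵥ b) ⬝ᵥ (A *ᵥ a + A *ᵥ b)
      = (A *ᵥ a) ⬝ᵥ (A *ᵥ a) + 2 * ((A *ᵥ a) ⬝ᵥ (A *ᵥ b)) + (A *ᵥ b) ⬝ᵥ (A *ᵥ b) := by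
    rw [dotProduct_add, add_dotProduct, add_dotProduct, dotProduct_comm (A *ᵥ b) (A *ᵥ a)]
    ring
  have d2 : (A *ᵥ a - A *ᵥ b) ⬝ᵥ (A *ᵥ a - A *ᵥ b)
      = (A *ᵥ a) ⬝ᵥ (A *ᵥ a) - 2 * ((A *ᵥ a) ⬝ᵥ (A *ᵥ b)) + (A *ᵥ b) ⬝ᵥ (A *ᵥ b) := by
    rw [dotProduct_sub, sub_dotProduct, sub_dotProduct, dotProduct_comm (A *ᵥ b) (A *ᵥ a)]
    ring
  have d3 : (a + b) ⬝ᵥ (a + b) = a ⬝ᵥ a + 2 * (a ⬝ᵥ b) + b ⬝ᵥ b := by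
    rw [dotProduct_add, add_dotProduct, add_dotProduct, dotProduct_comm b a]; ring
  have d4 : (a - b) ⬝ᵥ (a - b) = a ⬝ᵥ a - 2 * (a ⬝ᵥ b) + b ⬝ᵥ b := by
    rw [dotProduct_sub, sub_dotProduct, sub_dotProduct, dotProduct_comm b a]; ring
  rw [d1, d3] at h1
  rw [d2, d4] at h2
  rw [abs_le] at h1 h2 ⊢
  constructor <;> nlinarith [h1.1, h1.2, h2.1, h2.2]

lemma rip_bilinear (hδ : ∀ x : Fin n → ℝ, (Function.support x).ncard ≤ K →
      (1 - δ) * l2 x ^ 2 ≤ l2 (A *ᵥ x) ^ 2 ∧ l2 (A *ᵥ x) ^ 2 ≤ (1 + δ) * l2 x ^ 2)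
    (hδ0 : 0 ≤ δ)
    {Ω : Set (Fin n)} (hΩ : Ω.ncard ≤ K) {a b : Fin n → ℝ}
    (ha : Function.support a ⊆ Ω) (hb : Function.support b ⊆ Ω) :
    |(A *ᵥ a) ⬝ᵥ (A *ᵥ b) - a ⬝ᵥ b| ≤ δ * l2 a * l2 b := by
  rcases eq_or_ne (l2 a) 0 with h0 | h0
  · have ha0 : a = 0 := l2_eq_zero h0
    subst ha0
    simp [mulVec_zero, h0]
  rcases eq_or_ne (l2 b) 0 with hb0 | hb0
  · have hb0' : b = 0 := l2_eq_zero hb0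
    subst hb0'
    simp [mulVec_zero, hb0]
  have hla : 0 < l2 a := lt_of_le_of_ne (l2_nonneg a) (Ne.symm h0)
  have hlb : 0 < l2 b := lt_of_le_of_ne (l2_nonneg b) (Ne.symm hb0)
  set s : ℝ := l2 b / l2 a with hs
  have hspos : 0 < s := div_pos hlb hla
  have hsupp : Function.support (s • a) ⊆ Ω := by
    intro i hi
    apply ha
    simp only [Function.mem_support, Pi.smul_apply, smul_eq_mul, ne_eq, mul_eq_zero,
      not_or] at hi
    exact hi.2
  have key := rip_polar hδ hΩ hsupp hb
  have e1 : A *ᵥ (s • a) = s • (A *ᵥ a) := mulVec_smul A s a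
  have e2 : (s • (A *ᵥ a)) ⬝ᵥ (A *ᵥ b) = s * ((A *ᵥ a) ⬝ᵥ (A *ᵥ b)) := smul_dotProduct s _ _
  have e3 : (s • a) ⬝ᵥ b = s * (a ⬝ᵥ b) := smul_dotProduct s a b
  have e4 : (s • a) ⬝ᵥ (s • a) = s ^ 2 * (a ⬝ᵥ a) := by
    rw [smul_dotProduct, dotProduct_smul]; ring_nf
  rw [e1, e2, e3, e4] at key
  have haa : a ⬝ᵥ a = l2 a ^ 2 := (l2_sq_dot a).symm
  have hbb : b ⬝ᵥ b = l2 b ^ 2 := (l2_sq_dot b).symm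
  rw [haa, hbb] at key
  have hss : s ^ 2 * l2 a ^ 2 = l2 b ^ 2 := by
    rw [hs]; field_simp
  rw [hss] at key
  have habs : |s * ((A *ᵥ a) ⬝ᵥ (A *ᵥ b)) - s * (a ⬝ᵥ b)|
      = s * |(A *ᵥ a) ⬝ᵥ (A *ᵥ b) - a ⬝ᵥ b| := by
    rw [← mul_sub, abs_mul, abs_of_pos hspos]
  rw [habs] at key
  have key2 : |(A *ᵥ a) ⬝ᵥ (A *ᵥ b) - a ⬝ᵥ b| ≤ δ * l2 b ^ 2 / s := by
    rw [le_div_iff₀ hspos]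
    calc |(A *ᵥ a) ⬝ᵥ (A *ᵥ b) - a ⬝ᵥ b| * s = s * |(A *ᵥ a) ⬝ᵥ (A *ᵥ b) - a ⬝ᵥ b| := by ring
      _ ≤ δ * (l2 b ^ 2 + l2 b ^ 2) / 2 := key
      _ = δ * l2 b ^ 2 := by ring
  calc |(A *ᵥ a) ⬝ᵥ (A *ᵥ b) - a ⬝ᵥ b| ≤ δ * l2 b ^ 2 / s := key2
    _ = δ * l2 a * l2 b := by rw [hs]; field_simp

lemma rip_op (hδ : ∀ x : Fin n → ℝ, (Function.support x).ncard ≤ K →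
      (1 - δ) * l2 x ^ 2 ≤ l2 (A *ᵥ x) ^ 2 ∧ l2 (A *ᵥ x) ^ 2 ≤ (1 + δ) * l2 x ^ 2)
    (hδ0 : 0 ≤ δ)
    {Ω : Set (Fin n)} (hΩ : Ω.ncard ≤ K) {z : Fin n → ℝ}
    (hz : Function.support z ⊆ Ω) :
    l2 (Ω.indicator (z - (Aᵀ * A) *ᵥ z)) ≤ δ * l2 z := by
  classical
  set w : Fin n → ℝ := Ω.indicator (z - (Aᵀ * A) *ᵥ z) with hw
  have hsupp : Function.support w ⊆ Ω := Set.support_indicator_subset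
  have hl2w : l2 w ^ 2 = w ⬝ᵥ (z - (Aᵀ * A) *ᵥ z) := by
    rw [l2_sq_dot]
    refine Finset.sum_congr rfl fun i _ => ?_
    by_cases hi : i ∈ Ω
    · rw [hw]; simp [Set.indicator_of_mem hi]
    · rw [hw]; simp [Set.indicator_of_notMem hi]
  have hdot : w ⬝ᵥ ((Aᵀ * A) *ᵥ z) = (A *ᵥ w) ⬝ᵥ (A *ᵥ z) := by
    rw [← mulVec_mulVec, dotProduct_mulVec, vecMul_transpose]
  have h1 : l2 w ^ 2 = -((A *ᵥ w) ⬝ᵥ (A *ᵥ z) - w ⬝ᵥ z) := by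
    rw [hl2w, dotProduct_sub, hdot]; ring
  have h2 := rip_bilinear hδ hδ0 hΩ hsupp hz
  have h3 : l2 w ^ 2 ≤ δ * l2 w * l2 z := by
    rw [h1]
    calc -((A *ᵥ w) ⬝ᵥ (A *ᵥ z) - w ⬝ᵥ z) ≤ |(A *ᵥ w) ⬝ᵥ (A *ᵥ z) - w ⬝ᵥ z| := neg_le_abs _
      _ ≤ δ * l2 w * l2 z := h2
  rcases eq_or_ne (l2 w) 0 with h0 | h0
  · rw [h0]; exact mul_nonneg hδ0 (l2_nonneg z)
  · have hlw : 0 < l2 w := lt_of_le_of_ne (l2_nonneg w) (Ne.symm h0)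
    nlinarith [h3]
end rip

lemma sqrt5_sq : Real.sqrt 5 ^ 2 = 5 := Real.sq_sqrt (by norm_num)
lemma sqrt5_ge_two : (2:ℝ) ≤ Real.sqrt 5 := by
  rw [show (2:ℝ) = Real.sqrt 4 by rw [show (4:ℝ) = 2^2 by norm_num, Real.sqrt_sq]; norm_num]
  exact Real.sqrt_le_sqrt (by norm_num)

lemma phi_sq : ((Real.sqrt 5 + 1) / 2) ^ 2 = (3 + Real.sqrt 5) / 2 := by
  have := sqrt5_sq; nlinarith [this]

lemma golden_point {a v w : ℝ} (h : v ^ 2 ≤ w ^ 2) :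
    a ^ 2 ≤ ((Real.sqrt 5 + 1) / 2) ^ 2 * (v - a) ^ 2
      + (((Real.sqrt 5 + 1) / 2) ^ 2 - 1) * w ^ 2 := by
  rw [phi_sq]
  set s := Real.sqrt 5 with hs
  have h5 : s ^ 2 = 5 := sqrt5_sq
  have h2 : (2:ℝ) ≤ s := sqrt5_ge_two
  nlinarith [sq_nonneg ((4 + 2*s)*v - (3 + s)*a), h, h5, h2, sq_nonneg (v - a), sq_nonneg a]

section golden
variable {n k : ℕ}

lemma golden_lemma (v x : Fin n → ℝ)
    (hxs : (Function.support x).ncard ≤ k)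
    (T : Set (Fin n)) (hTcard : T.ncard = min k n)
    (hdom : ∀ i ∈ T, ∀ j ∉ T, |v j| ≤ |v i|) :
    l2 (T.indicator v - x) ≤
      (Real.sqrt 5 + 1) / 2 * l2 ((Function.support x ∪ T).indicator (v - x)) := by
  classical
  set φ2 : ℝ := ((Real.sqrt 5 + 1) / 2) ^ 2 with hφ2
  have hφ2ge : 1 ≤ φ2 := by
    rw [hφ2, phi_sq]; nlinarith [sqrt5_ge_two]
  set Sf : Finset (Fin n) := Finset.univ.filter (fun i => x i ≠ 0) with hSf
  set Tf : Finset (Fin n) := Finset.univ.filter (fun i => i ∈ T) with hTf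
  have hSmem : ∀ i, i ∈ Sf ↔ x i ≠ 0 := fun i => by simp [hSf]
  have hTmem : ∀ i, i ∈ Tf ↔ i ∈ T := fun i => by simp [hTf]
  -- cardinalities
  have hScard : Sf.card ≤ min k n := by
    have h1 : (Function.support x).ncard = Sf.card := by
      rw [Set.ncard_eq_toFinset_card']
      congr 1
      ext i
      simp [hSf, Function.mem_support]
    have h2 : Sf.card ≤ n := le_trans (Finset.card_le_card (Finset.subset_univ _)) (by simp)
    omega
  have hTfcard : Tf.card = min k n := by
    have h1 : T.ncard = Tf.card := by
      rw [Set.ncard_eq_toFinset_card']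
      congr 1
      ext i
      simp [hTf]
    omega
  have hcard : (Sf \ Tf).card ≤ (Tf \ Sf).card := by
    have h1 := Finset.card_sdiff_add_card_inter Sf Tf
    have h2 := Finset.card_sdiff_add_card_inter Tf Sf
    rw [Finset.inter_comm Tf Sf] at h2
    omega
  -- injection from Sf \ Tf into Tf \ Sf
  obtain ⟨t', ht'sub, ht'card⟩ := Finset.exists_subset_card_eq hcard
  have e := Finset.equivOfCardEq ht'card.symm
  -- pointwise bound on Sf \ Tf
  have hpt : ∀ a : {i // i ∈ Sf \ Tf}, x a.1 ^ 2 ≤ φ2 * (v a.1 - x a.1) ^ 2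
      + (φ2 - 1) * v (e a).1 ^ 2 := by
    intro a
    have haT : a.1 ∉ T := by
      have := Finset.mem_sdiff.mp a.2
      rw [← hTmem]; exact this.2
    have hbT : (e a).1 ∈ T := by
      have := ht'sub (e a).2
      rw [← hTmem]; exact (Finset.mem_sdiff.mp this).1
    have hd := hdom _ hbT _ haT
    have hvv : v a.1 ^ 2 ≤ v (e a).1 ^ 2 := by
      rw [← sq_abs (v a.1), ← sq_abs (v (e a).1)]
      exact pow_le_pow_left₀ (abs_nonneg _) hd 2
    exact golden_point hvv
  -- summing
  have hsum1 : ∑ i ∈ Sf \ Tf, x i ^ 2 ≤ φ2 * ∑ i ∈ Sf \ Tf, (v i - x i) ^ 2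
      + (φ2 - 1) * ∑ j ∈ Tf \ Sf, v j ^ 2 := by
    have h1 : ∑ i ∈ Sf \ Tf, x i ^ 2 = ∑ a : {i // i ∈ Sf \ Tf}, x a.1 ^ 2 :=
      (Finset.sum_coe_sort (Sf \ Tf) (fun i => x i ^ 2)).symm
    have h2 : ∑ a : {i // i ∈ Sf \ Tf}, (φ2 * (v a.1 - x a.1) ^ 2 + (φ2 - 1) * v (e a).1 ^ 2)
        = φ2 * ∑ i ∈ Sf \ Tf, (v i - x i) ^ 2 + (φ2 - 1) * ∑ a : {i // i ∈ Sf \ Tf}, v (e a).1 ^ 2 := by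
      rw [Finset.sum_add_distrib, ← Finset.mul_sum, ← Finset.mul_sum,
        Finset.sum_coe_sort (Sf \ Tf) (fun i => (v i - x i) ^ 2)]
    have h3 : ∑ a : {i // i ∈ Sf \ Tf}, v (e a).1 ^ 2 = ∑ b : {j // j ∈ t'}, v b.1 ^ 2 :=
      Fintype.sum_equiv e _ _ (fun a => rfl)
    have h4 : ∑ b : {j // j ∈ t'}, v b.1 ^ 2 = ∑ j ∈ t', v j ^ 2 :=
      Finset.sum_coe_sort t' (fun j => v j ^ 2)
    have h5 : ∑ j ∈ t', v j ^ 2 ≤ ∑ j ∈ Tf \ Sf, v j ^ 2 :=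
      Finset.sum_le_sum_of_subset_of_nonneg ht'sub (fun j _ _ => sq_nonneg _)
    calc ∑ i ∈ Sf \ Tf, x i ^ 2
        = ∑ a : {i // i ∈ Sf \ Tf}, x a.1 ^ 2 := h1
      _ ≤ ∑ a : {i // i ∈ Sf \ Tf}, (φ2 * (v a.1 - x a.1) ^ 2 + (φ2 - 1) * v (e a).1 ^ 2) :=
          Finset.sum_le_sum fun a _ => hpt a
      _ = φ2 * ∑ i ∈ Sf \ Tf, (v i - x i) ^ 2 + (φ2 - 1) * ∑ a : {i // i ∈ Sf \ Tf}, v (e a).1 ^ 2 := h2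
      _ = φ2 * ∑ i ∈ Sf \ Tf, (v i - x i) ^ 2 + (φ2 - 1) * ∑ j ∈ t', v j ^ 2 := by rw [h3, h4]
      _ ≤ φ2 * ∑ i ∈ Sf \ Tf, (v i - x i) ^ 2 + (φ2 - 1) * ∑ j ∈ Tf \ Sf, v j ^ 2 := by
          have : (0:ℝ) ≤ φ2 - 1 := by linarith
          nlinarith [h5, this]
  -- v j ^ 2 = (v j - x j)^2 on Tf \ Sf
  have hveq : ∑ j ∈ Tf \ Sf, v j ^ 2 = ∑ j ∈ Tf \ Sf, (v j - x j) ^ 2 := by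
    refine Finset.sum_congr rfl fun j hj => ?_
    have : x j = 0 := by
      have := (Finset.mem_sdiff.mp hj).2
      rw [hSmem] at this
      simpa using this
    rw [this, sub_zero]
  -- LHS decomposition
  have hLHS : l2 (T.indicator v - x) ^ 2
      = ∑ i ∈ Tf, (v i - x i) ^ 2 + ∑ i ∈ Sf \ Tf, x i ^ 2 := by
    rw [l2_sq]
    rw [← Finset.sum_filter_add_sum_filter_not Finset.univ (fun i => i ∈ T)
      (fun i => ((T.indicator v - x) i) ^ 2)]
    congr 1
    · rw [← hTf]
      refine Finset.sum_congr rfl fun i hi => ?_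
      have hiT : i ∈ T := (hTmem i).mp hi
      simp [Set.indicator_of_mem hiT]
    · rw [show Finset.univ.filter (fun i => ¬ i ∈ T) = (Finset.univ \ Tf) by
        ext i; simp [hTf]]
      have hsub : Sf \ Tf ⊆ Finset.univ \ Tf := by
        intro i hi
        simp only [Finset.mem_sdiff] at hi ⊢
        exact ⟨Finset.mem_univ i, hi.2⟩
      rw [← Finset.sum_subset hsub]
      · refine Finset.sum_congr rfl fun i hi => ?_
        have hiT : i ∉ T := by
          have := (Finset.mem_sdiff.mp hi).2
          rw [← hTmem]; exact this
        simp [Set.indicator_of_notMem hiT]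
      · intro i hiu hiS
        have hiT : i ∉ T := by
          have := (Finset.mem_sdiff.mp hiu).2
          rw [← hTmem]; exact this
        have hx0 : x i = 0 := by
          by_contra hc
          exact hiS (Finset.mem_sdiff.mpr ⟨(hSmem i).mpr hc, (Finset.mem_sdiff.mp hiu).2⟩)
        simp [Set.indicator_of_notMem hiT, hx0]
  -- RHS decomposition
  have hRHS : l2 ((Function.support x ∪ T).indicator (v - x)) ^ 2
      = ∑ i ∈ Tf, (v i - x i) ^ 2 + ∑ i ∈ Sf \ Tf, (v i - x i) ^ 2 := by
    rw [l2_sq]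
    have hunion : ∀ i, i ∈ Function.support x ∪ T ↔ i ∈ Tf ∪ (Sf \ Tf) := by
      intro i
      simp only [Set.mem_union, Function.mem_support, Finset.mem_union, Finset.mem_sdiff,
        hSmem, hTmem]
      tauto
    rw [← Finset.sum_union (Finset.disjoint_sdiff)]
    rw [← Finset.sum_subset (Finset.subset_univ (Tf ∪ (Sf \ Tf)))]
    · refine Finset.sum_congr rfl fun i hi => ?_
      have : i ∈ Function.support x ∪ T := (hunion i).mpr hi
      simp [Set.indicator_of_mem this]
    · intro i _ hi
      have : i ∉ Function.support x ∪ T := fun hc => hi ((hunion i).mp hc)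
      simp [Set.indicator_of_notMem this]
  -- assemble
  have hmain : l2 (T.indicator v - x) ^ 2
      ≤ φ2 * l2 ((Function.support x ∪ T).indicator (v - x)) ^ 2 := by
    rw [hLHS, hRHS]
    have hTsplit : ∑ j ∈ Tf \ Sf, (v j - x j) ^ 2 ≤ ∑ i ∈ Tf, (v i - x i) ^ 2 :=
      Finset.sum_le_sum_of_subset_of_nonneg (Finset.sdiff_subset) (fun j _ _ => sq_nonneg _)
    have h1 := hsum1
    rw [hveq] at h1
    have hTnonneg : (0:ℝ) ≤ ∑ i ∈ Tf, (v i - x i) ^ 2 :=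
      Finset.sum_nonneg fun i _ => sq_nonneg _
    nlinarith [h1, hTsplit, hTnonneg, hφ2ge]
  have hphipos : (0:ℝ) ≤ (Real.sqrt 5 + 1) / 2 := by positivity
  refine le_of_sq_le_sq' (l2_nonneg _) (mul_nonneg hphipos (l2_nonneg _)) ?_
  rw [mul_pow]
  exact hmain
end golden

set_option maxHeartbeats 1000000 in
lemma l2_zero {d : ℕ} : l2 (0 : Fin d → ℝ) = 0 := by simp [l2]

lemma abs_le_l2 {d : ℕ} (v : Fin d → ℝ) (i : Fin d) : |v i| ≤ l2 v := by
  rw [← Real.sqrt_sq_eq_abs]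
  exact Real.sqrt_le_sqrt (Finset.single_le_sum (f := fun j => v j ^ 2)
    (fun j _ => sq_nonneg _) (Finset.mem_univ i))

lemma l2_indicator_le {d : ℕ} (Ω : Set (Fin d)) (w : Fin d → ℝ) :
    l2 (Ω.indicator w) ≤ l2 w := by
  refine l2_mono fun i => ?_
  by_cases hi : i ∈ Ω
  · rw [Set.indicator_of_mem hi]
  · rw [Set.indicator_of_notMem hi]; simp [abs_nonneg]

lemma l2_indicator_mono {d : ℕ} {Ω Ω' : Set (Fin d)} (h : Ω ⊆ Ω') (w : Fin d → ℝ) :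
    l2 (Ω.indicator w) ≤ l2 (Ω'.indicator w) := by
  refine l2_mono fun i => ?_
  by_cases hi : i ∈ Ω
  · rw [Set.indicator_of_mem hi, Set.indicator_of_mem (h hi)]
  · rw [Set.indicator_of_notMem hi]; simp [abs_nonneg]

set_option maxHeartbeats 1000000 in
/-- Theorem (NDRT): if `y = Ax + e` with `x` nonnegative `k`-sparse,
`δ₃ₖ + σ₁² - σ_m² < (√5 - 1)/2`, `ε > 0`, `σ_m² + (σ_m²/σ₁²)ε ≤ λ ≤ σ_m² + ε`, and
`x⁽ᵖ⁺¹⁾ = H_k((x⁽ᵖ⁾ + λ(AᵀA + εI)⁻¹Aᵀ(y - Ax⁽ᵖ⁾))⁺)` (the thresholding realized at step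
`p` by an index set `T p` of `k` largest-in-magnitude entries of the positive part),
starting from a `k`-sparse `x⁽⁰⁾`, then `α < 1` and for all `p`,
`‖x⁽ᵖ⁾ - x‖₂ ≤ αᵖ ‖x⁽⁰⁾ - x‖₂ + (γ/(1 - α)) ‖e‖₂`, where
`α = φ(δ₃ₖ + σ₁² - λσ₁²/(σ₁² + ε))` and `γ = φλσ₁/(σ_m² + ε)`; moreover if `e = 0`
then `x⁽ᵖ⁾ → x`. -/
theorem stmt12 {m n k : ℕ} (hmn : m ≤ n) (A : Matrix (Fin m) (Fin n) ℝ)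
    (x : Fin n → ℝ) (e y : Fin m → ℝ) (hy : y = A *ᵥ x + e)
    (hx0 : ∀ i, 0 ≤ x i) (hxs : (Function.support x).ncard ≤ k)
    (σ1 σm ε lam : ℝ) (hσ1 : 0 ≤ σ1) (hσm : 0 ≤ σm)
    (hσ1mem : σ1 ^ 2 ∈ spectrum ℝ (A * Aᵀ))
    (hσ1max : ∀ μ ∈ spectrum ℝ (A * Aᵀ), μ ≤ σ1 ^ 2)
    (hσmmem : σm ^ 2 ∈ spectrum ℝ (A * Aᵀ))
    (hσmmin : ∀ μ ∈ spectrum ℝ (A * Aᵀ), σm ^ 2 ≤ μ)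
    (hRIP : RIC A (3 * k) + σ1 ^ 2 - σm ^ 2 < (Real.sqrt 5 - 1) / 2)
    (hε : 0 < ε)
    (hlam1 : σm ^ 2 + σm ^ 2 / σ1 ^ 2 * ε ≤ lam) (hlam2 : lam ≤ σm ^ 2 + ε)
    (xseq : ℕ → Fin n → ℝ) (hx0s : (Function.support (xseq 0)).ncard ≤ k)
    (u : ℕ → Fin n → ℝ)
    (hu : ∀ p, u p = xseq p + lam • ((Aᵀ * A + ε • 1)⁻¹ *ᵥ (Aᵀ *ᵥ (y - A *ᵥ xseq p))))
    (T : ℕ → Set (Fin n)) (hTcard : ∀ p, (T p).ncard = min k n)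
    (hT : ∀ p, ∀ i ∈ T p, ∀ j ∉ T p, |max (u p j) 0| ≤ |max (u p i) 0|)
    (hiter : ∀ p, xseq (p + 1) = (T p).indicator fun i => max (u p i) 0) :
    (Real.sqrt 5 + 1) / 2 * (RIC A (3 * k) + σ1 ^ 2 - lam * σ1 ^ 2 / (σ1 ^ 2 + ε)) < 1 ∧
    (∀ p : ℕ,
      l2 (xseq p - x) ≤
        ((Real.sqrt 5 + 1) / 2 *
            (RIC A (3 * k) + σ1 ^ 2 - lam * σ1 ^ 2 / (σ1 ^ 2 + ε))) ^ p *
          l2 (xseq 0 - x)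
        + (Real.sqrt 5 + 1) / 2 * lam * σ1 / (σm ^ 2 + ε) /
            (1 - (Real.sqrt 5 + 1) / 2 *
              (RIC A (3 * k) + σ1 ^ 2 - lam * σ1 ^ 2 / (σ1 ^ 2 + ε))) * l2 e) ∧
    (e = 0 → Filter.Tendsto xseq Filter.atTop (nhds x)) := by
  have hδ0 : 0 ≤ RIC A (3 * k) := RIC_nonneg A (3 * k)
  have hrip := RIC_rip A (3 * k)
  set δ : ℝ := RIC A (3 * k) with hδdef
  set φ : ℝ := (Real.sqrt 5 + 1) / 2 with hφdef
  have hφpos : 0 < φ := by rw [hφdef]; positivity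
  have hσ1σm : σm ^ 2 ≤ σ1 ^ 2 := hσmmin _ hσ1mem
  have hs1e : (0:ℝ) < σ1 ^ 2 + ε := by positivity
  have hsme : (0:ℝ) < σm ^ 2 + ε := by positivity
  have hlam0 : 0 ≤ lam := le_trans (by positivity) hlam1
  -- key: σm² ≤ lam σ1²/(σ1²+ε)
  have hlamkey : σm ^ 2 ≤ lam * σ1 ^ 2 / (σ1 ^ 2 + ε) := by
    rcases eq_or_lt_of_le hσ1 with h10 | h10
    · have hσm0 : σm ^ 2 = 0 := by nlinarith
      rw [hσm0]
      positivity
    · have hσ1sq : 0 < σ1 ^ 2 := by positivity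
      rw [le_div_iff₀ hs1e]
      have h1 : σm ^ 2 + σm ^ 2 / σ1 ^ 2 * ε ≤ lam := hlam1
      have h2 : (σm ^ 2 + σm ^ 2 / σ1 ^ 2 * ε) * σ1 ^ 2 = σm ^ 2 * (σ1 ^ 2 + ε) := by
        field_simp
      nlinarith [mul_le_mul_of_nonneg_right h1 (le_of_lt hσ1sq)]
  -- ρ bounds
  set ρ : ℝ := δ + σ1 ^ 2 - lam * σ1 ^ 2 / (σ1 ^ 2 + ε) with hρdef
  have hρ0 : 0 ≤ ρ := by
    have h1 : lam * σ1 ^ 2 / (σ1 ^ 2 + ε) ≤ σ1 ^ 2 := by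
      rw [div_le_iff₀ hs1e]
      nlinarith
    rw [hρdef]
    linarith
  have hρlt : ρ < (Real.sqrt 5 - 1) / 2 := by
    rw [hρdef]
    have : δ + σ1 ^ 2 - lam * σ1 ^ 2 / (σ1 ^ 2 + ε) ≤ δ + σ1 ^ 2 - σm ^ 2 := by linarith
    exact lt_of_le_of_lt this hRIP
  set α : ℝ := φ * ρ with hαdef
  have hα0 : 0 ≤ α := mul_nonneg hφpos.le hρ0
  have hαlt1 : α < 1 := by
    have h1 : α < φ * ((Real.sqrt 5 - 1) / 2) := by
      rw [hαdef]
      exact mul_lt_mul_of_pos_left hρlt hφpos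
    have h2 : φ * ((Real.sqrt 5 - 1) / 2) = 1 := by
      rw [hφdef]
      linear_combination sqrt5_sq / 4
    linarith
  set γ : ℝ := φ * lam * σ1 / (σm ^ 2 + ε) with hγdef
  have hγ0 : 0 ≤ γ := by
    rw [hγdef]
    positivity
  -- supports of iterates
  have hsupp : ∀ p, (Function.support (xseq p)).ncard ≤ k := by
    intro p
    cases p with
    | zero => exact hx0s
    | succ q =>
      rw [hiter q]
      have h1 : Function.support ((T q).indicator fun i => max (u q i) 0) ⊆ T q :=
        Set.support_indicator_subset
      have h2 := Set.ncard_le_ncard h1 (Set.toFinite (T q))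
      rw [hTcard q] at h2
      omega
  -- main recursion
  have hstep : ∀ p, l2 (xseq (p + 1) - x) ≤ α * l2 (xseq p - x) + γ * l2 e := by
    intro p
    set z : Fin n → ℝ := xseq p - x with hzdef
    set Ω : Set (Fin n) := Function.support x ∪ T p ∪ Function.support (xseq p) with hΩdef
    have hΩcard : Ω.ncard ≤ 3 * k := by
      rw [hΩdef]
      have h1 := Set.ncard_union_le (Function.support x ∪ T p) (Function.support (xseq p))
      have h2 := Set.ncard_union_le (Function.support x) (T p)
      have h3 := hsupp p
      have h4 : (T p).ncard ≤ k := by rw [hTcard p]; omega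
      omega
    have hzsupp : Function.support z ⊆ Ω := by
      rw [hzdef]
      intro i hi
      rw [Function.mem_support] at hi
      rw [hΩdef]
      by_cases hx : x i = 0
      · have : xseq p i ≠ 0 := by
          intro hc
          apply hi
          simp [Pi.sub_apply, hc, hx]
        exact Or.inr this
      · exact Or.inl (Or.inl hx)
    have hSTsub : Function.support x ∪ T p ⊆ Ω := by
      rw [hΩdef]; exact Set.subset_union_left
    -- decomposition of u p - x
    set C : Matrix (Fin m) (Fin m) ℝ := Cmat A ε with hCdef
    set r1 : Fin n → ℝ := z - (Aᵀ * A) *ᵥ z with hr1def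
    set r2 : Fin n → ℝ := Aᵀ *ᵥ ((1 - lam • C) *ᵥ (A *ᵥ z)) with hr2def
    set r3 : Fin n → ℝ := lam • (Aᵀ *ᵥ (C *ᵥ e)) with hr3def
    have hBA : ∀ w : Fin m → ℝ, (Aᵀ * A + ε • 1)⁻¹ *ᵥ (Aᵀ *ᵥ w) = Aᵀ *ᵥ (C *ᵥ w) := by
      intro w
      rw [mulVec_mulVec, swap_inv A hε, ← mulVec_mulVec]
    have hdecomp : u p - x = r1 + r2 + r3 := by
      rw [hu p, hy]
      have h1 : A *ᵥ x + e - A *ᵥ xseq p = e - A *ᵥ z := by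
        rw [hzdef, mulVec_sub]
        abel
      rw [h1]
      have h2 : Aᵀ *ᵥ (e - A *ᵥ z) = Aᵀ *ᵥ e - Aᵀ *ᵥ (A *ᵥ z) := mulVec_sub _ _ _
      rw [h2]
      have h3 : (Aᵀ * A + ε • 1)⁻¹ *ᵥ (Aᵀ *ᵥ e - Aᵀ *ᵥ (A *ᵥ z))
          = Aᵀ *ᵥ (C *ᵥ e) - Aᵀ *ᵥ (C *ᵥ (A *ᵥ z)) := by
        rw [mulVec_sub, hBA, hBA]
      rw [h3]
      have h4 : r2 = Aᵀ *ᵥ (A *ᵥ z) - lam • (Aᵀ *ᵥ (C *ᵥ (A *ᵥ z))) := by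
        rw [hr2def, sub_mulVec, one_mulVec, smul_mulVec, mulVec_sub, mulVec_smul]
      rw [hr1def, h4, hr3def]
      have h5 : (Aᵀ * A) *ᵥ z = Aᵀ *ᵥ (A *ᵥ z) := (mulVec_mulVec _ _ _).symm
      rw [h5]
      simp only [hzdef]
      ext i
      simp only [Pi.add_apply, Pi.sub_apply, Pi.smul_apply, smul_eq_mul]
      ring
    -- golden step
    have hgold : l2 (xseq (p + 1) - x) ≤ φ * l2 ((Function.support x ∪ T p).indicator
        ((fun i => max (u p i) 0) - x)) := by
      rw [hiter p]
      exact golden_lemma _ x hxs (T p) (hTcard p) (hT p)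
    -- relu step
    have hrelu : l2 ((Function.support x ∪ T p).indicator ((fun i => max (u p i) 0) - x))
        ≤ l2 ((Function.support x ∪ T p).indicator (u p - x)) := by
      refine l2_mono fun i => ?_
      by_cases hi : i ∈ Function.support x ∪ T p
      · rw [Set.indicator_of_mem hi, Set.indicator_of_mem hi]
        simp only [Pi.sub_apply]
        rcases le_or_gt 0 (u p i) with h | h
        · rw [max_eq_left h]
        · rw [max_eq_right h.le]
          rw [zero_sub, abs_neg, abs_of_nonneg (hx0 i), abs_of_nonpos (by nlinarith [hx0 i])]
          nlinarith [hx0 i]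
      · rw [Set.indicator_of_notMem hi, Set.indicator_of_notMem hi]
    -- enlarge support set
    have henlarge : l2 ((Function.support x ∪ T p).indicator (u p - x))
        ≤ l2 (Ω.indicator (u p - x)) := l2_indicator_mono hSTsub _
    -- split into three terms
    have hsplit : l2 (Ω.indicator (u p - x)) ≤ l2 (Ω.indicator r1) + l2 (Ω.indicator r2)
        + l2 (Ω.indicator r3) := by
      rw [hdecomp]
      have h1 : Ω.indicator (r1 + r2 + r3) = Ω.indicator r1 + Ω.indicator r2
          + Ω.indicator r3 := by
        rw [Set.indicator_add' , Set.indicator_add']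
      rw [h1]
      calc l2 (Ω.indicator r1 + Ω.indicator r2 + Ω.indicator r3)
          ≤ l2 (Ω.indicator r1 + Ω.indicator r2) + l2 (Ω.indicator r3) := l2_add_le _ _
        _ ≤ l2 (Ω.indicator r1) + l2 (Ω.indicator r2) + l2 (Ω.indicator r3) := by
            have := l2_add_le (Ω.indicator r1) (Ω.indicator r2)
            linarith
    -- bound r1
    have hb1 : l2 (Ω.indicator r1) ≤ δ * l2 z := by
      rw [hr1def]
      exact rip_op hrip hδ0 hΩcard hzsupp
    -- bound r2
    have hb2 : l2 (Ω.indicator r2) ≤ (σ1 ^ 2 - lam * σ1 ^ 2 / (σ1 ^ 2 + ε)) * l2 z := by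
      have h1 : l2 (Ω.indicator r2) ≤ l2 r2 := l2_indicator_le _ _
      have h2 : l2 r2 ≤ σ1 * l2 ((1 - lam • C) *ᵥ (A *ᵥ z)) := by
        rw [hr2def]
        exact bound_At A hσ1 hσ1max _
      have h3 : l2 ((1 - lam • C) *ᵥ (A *ᵥ z)) ≤ (1 - lam * (σ1 ^ 2 + ε)⁻¹) * l2 (A *ᵥ z) := by
        rw [hCdef]
        exact bound_M A hε hσm hσ1σm hlam0 hlam2 hσmmin hσ1max _
      have h4 : l2 (A *ᵥ z) ≤ σ1 * l2 z := bound_A A hσ1 hσ1max z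
      have h5 : 0 ≤ 1 - lam * (σ1 ^ 2 + ε)⁻¹ := by
        have : lam * (σ1 ^ 2 + ε)⁻¹ ≤ 1 := by
          rw [← div_eq_mul_inv, div_le_one hs1e]
          nlinarith
        linarith
      have h6 : σ1 * ((1 - lam * (σ1 ^ 2 + ε)⁻¹) * (σ1 * l2 z))
          = (σ1 ^ 2 - lam * σ1 ^ 2 / (σ1 ^ 2 + ε)) * l2 z := by
        field_simp
      calc l2 (Ω.indicator r2) ≤ l2 r2 := h1
        _ ≤ σ1 * l2 ((1 - lam • C) *ᵥ (A *ᵥ z)) := h2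
        _ ≤ σ1 * ((1 - lam * (σ1 ^ 2 + ε)⁻¹) * l2 (A *ᵥ z)) := by
            refine mul_le_mul_of_nonneg_left h3 hσ1
        _ ≤ σ1 * ((1 - lam * (σ1 ^ 2 + ε)⁻¹) * (σ1 * l2 z)) := by
            refine mul_le_mul_of_nonneg_left (mul_le_mul_of_nonneg_left h4 h5) hσ1
        _ = (σ1 ^ 2 - lam * σ1 ^ 2 / (σ1 ^ 2 + ε)) * l2 z := h6
    -- bound r3
    have hb3 : l2 (Ω.indicator r3) ≤ lam * σ1 / (σm ^ 2 + ε) * l2 e := by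
      have h1 : l2 (Ω.indicator r3) ≤ l2 r3 := l2_indicator_le _ _
      have h2 : l2 r3 = lam * l2 (Aᵀ *ᵥ (C *ᵥ e)) := by
        rw [hr3def, l2_smul, abs_of_nonneg hlam0]
      have h3 : l2 (Aᵀ *ᵥ (C *ᵥ e)) ≤ σ1 * l2 (C *ᵥ e) := bound_At A hσ1 hσ1max _
      have h4 : l2 (C *ᵥ e) ≤ (σm ^ 2 + ε)⁻¹ * l2 e := by
        rw [hCdef]
        exact bound_C A hε hσm hσmmin e
      calc l2 (Ω.indicator r3) ≤ l2 r3 := h1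
        _ = lam * l2 (Aᵀ *ᵥ (C *ᵥ e)) := h2
        _ ≤ lam * (σ1 * ((σm ^ 2 + ε)⁻¹ * l2 e)) := by
            refine mul_le_mul_of_nonneg_left ?_ hlam0
            exact le_trans h3 (mul_le_mul_of_nonneg_left h4 hσ1)
        _ = lam * σ1 / (σm ^ 2 + ε) * l2 e := by field_simp
    -- combine
    calc l2 (xseq (p + 1) - x)
        ≤ φ * l2 ((Function.support x ∪ T p).indicator ((fun i => max (u p i) 0) - x)) := hgold
      _ ≤ φ * (l2 (Ω.indicator r1) + l2 (Ω.indicator r2) + l2 (Ω.indicator r3)) := by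
          refine mul_le_mul_of_nonneg_left ?_ hφpos.le
          exact le_trans hrelu (le_trans henlarge hsplit)
      _ ≤ φ * ((δ * l2 z) + (σ1 ^ 2 - lam * σ1 ^ 2 / (σ1 ^ 2 + ε)) * l2 z
          + lam * σ1 / (σm ^ 2 + ε) * l2 e) := by
          refine mul_le_mul_of_nonneg_left ?_ hφpos.le
          linarith
      _ = α * l2 z + γ * l2 e := by
          rw [hαdef, hρdef, hγdef]
          ring
  -- induction
  have hbound : ∀ p : ℕ, l2 (xseq p - x) ≤ α ^ p * l2 (xseq 0 - x) + γ / (1 - α) * l2 e := by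
    intro p
    induction p with
    | zero =>
      simp only [pow_zero, one_mul]
      have : 0 ≤ γ / (1 - α) * l2 e :=
        mul_nonneg (div_nonneg hγ0 (by linarith)) (l2_nonneg e)
      linarith
    | succ q ih =>
      have h1 := hstep q
      have h2 : α * l2 (xseq q - x) ≤ α * (α ^ q * l2 (xseq 0 - x) + γ / (1 - α) * l2 e) :=
        mul_le_mul_of_nonneg_left ih hα0
      have h3 : α * (α ^ q * l2 (xseq 0 - x) + γ / (1 - α) * l2 e) + γ * l2 e
          = α ^ (q + 1) * l2 (xseq 0 - x) + (α * (γ / (1 - α)) + γ) * l2 e := by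
        ring
      have h4 : α * (γ / (1 - α)) + γ = γ / (1 - α) := by
        have h1α : 1 - α ≠ 0 := by linarith
        field_simp
        ring
      calc l2 (xseq (q + 1) - x) ≤ α * l2 (xseq q - x) + γ * l2 e := h1
        _ ≤ α * (α ^ q * l2 (xseq 0 - x) + γ / (1 - α) * l2 e) + γ * l2 e := by linarith
        _ = α ^ (q + 1) * l2 (xseq 0 - x) + (α * (γ / (1 - α)) + γ) * l2 e := h3
        _ = α ^ (q + 1) * l2 (xseq 0 - x) + γ / (1 - α) * l2 e := by rw [h4]
  refine ⟨hαlt1, hbound, ?_⟩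
  -- convergence when e = 0
  intro he
  subst he
  have hb0 : ∀ p, l2 (xseq p - x) ≤ α ^ p * l2 (xseq 0 - x) := by
    intro p
    have := hbound p
    rw [l2_zero] at this
    simpa using this
  rw [tendsto_pi_nhds]
  intro i
  have hsq : Filter.Tendsto (fun p => α ^ p * l2 (xseq 0 - x)) Filter.atTop (nhds 0) := by
    have := tendsto_pow_atTop_nhds_zero_of_lt_one hα0 hαlt1
    simpa using this.mul_const (l2 (xseq 0 - x))
  have habs : ∀ p, |xseq p i - x i| ≤ α ^ p * l2 (xseq 0 - x) := by
    intro p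
    calc |xseq p i - x i| = |(xseq p - x) i| := by simp [Pi.sub_apply]
      _ ≤ l2 (xseq p - x) := abs_le_l2 _ i
      _ ≤ α ^ p * l2 (xseq 0 - x) := hb0 p
  have hdist : Filter.Tendsto (fun p => |xseq p i - x i|) Filter.atTop (nhds 0) :=
    squeeze_zero (fun p => abs_nonneg _) habs hsq
  have : Filter.Tendsto (fun p => xseq p i) Filter.atTop (nhds (x i)) := by
    rw [tendsto_iff_dist_tendsto_zero]
    simpa [Real.dist_eq] using hdist
  exact this
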